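/- arXiv:2007.02644 — 2 statements merged into one kernel-verified Lean document; each statement's English description precedes it below -/
import Mathlib

section
/- Let A be a commutative ring that is an algebra over ℚ, and let u, v ∈ A be nilpotent elements. Set w := u + v − u·v, so that (1−u)(1−v) = 1−w. Then w is nilpotent, and for every natural number M with u^{M+1} = 0, v^{M+1} = 0 and w^{M+1} = 0 one has the identity −∑_{n=1}^{M} (1/n)·wⁿ = (−∑_{n=1}^{M} (1/n)·uⁿ) + (−∑_{n=1}^{M} (1/n)·vⁿ) in A; that is, ln((1−u)(1−v)) = ln(1−u) + ln(1−v). -/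
/-!
Substitute `u ↦ t u`, `v ↦ t v` and compare both sides as polynomials in `t` over `A`: they
agree at `t = 0`, and their `t`-derivatives agree because, once the truncation order kills all
powers involved, `(1 - x) · d/dt log(1 - x) = -dx/dt`, while `1 - w = (1 - u)(1 - v)` is a unit.
Over a `ℚ`-algebra a polynomial with vanishing derivative is constant; evaluate at `t = 1`.
-/

open Finset Polynomial

lemma pow_add_sub_mul_eq_zero {R : Type*} [CommRing R] {x y : R} {N : ℕ} (hx : x ^ N = 0)
    (hy : y ^ N = 0) : (x + y - x * y) ^ (2 * N) = 0 := by
  have hyx : (y * (1 - x)) ^ N = 0 := by rw [mul_pow, hy, zero_mul]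
  rw [show x + y - x * y = x + y * (1 - x) by ring]
  exact (Commute.all _ _).add_pow_eq_zero_of_add_le_succ_of_pow_eq_zero hx hyx (by omega)

lemma Polynomial.eval_eq_of_derivative_eq_zero {R : Type*} [CommRing R] [IsAddTorsionFree R]
    {p : R[X]} (hp : derivative p = 0) (a b : R) : p.eval a = p.eval b := by
  rw [eq_C_of_derivative_eq_zero hp, eval_C, eval_C]

section TruncLog

variable {B : Type*} [CommRing B] [Algebra ℚ B]

def truncLogOneSub (N : ℕ) (x : B) : B :=
  -∑ n ∈ Icc 1 N, (n : ℚ)⁻¹ • x ^ n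

@[simp]
lemma truncLogOneSub_zero (N : ℕ) : truncLogOneSub N (0 : B) = 0 := by
  rw [truncLogOneSub, neg_eq_zero]
  refine sum_eq_zero fun n hn => ?_
  rw [zero_pow (Nat.one_le_iff_ne_zero.mp (mem_Icc.mp hn).1), smul_zero]

lemma truncLogOneSub_eq_of_pow_eq_zero {M N : ℕ} (hMN : M ≤ N) {x : B}
    (hx : x ^ (M + 1) = 0) : truncLogOneSub N x = truncLogOneSub M x := by
  rw [truncLogOneSub, truncLogOneSub, neg_inj, ← sum_subset (Icc_subset_Icc_right hMN)]
  intro n hn hnM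
  simp only [mem_Icc, not_and, not_le] at hn hnM
  rw [pow_eq_zero_of_le (hnM hn.1) hx, smul_zero]

lemma map_truncLogOneSub {C F : Type*} [CommRing C] [Algebra ℚ C] [FunLike F B C]
    [RingHomClass F B C] (f : F) (N : ℕ) (x : B) :
    f (truncLogOneSub N x) = truncLogOneSub N (f x) := by
  simp only [truncLogOneSub, map_neg, map_sum, map_rat_smul, map_pow]

lemma Derivation.map_truncLogOneSub (D : Derivation ℚ B B) (N : ℕ) (x : B) :
    D (truncLogOneSub N x) = -(∑ i ∈ range N, x ^ i) * D x := by
  have hterm : ∀ n ∈ Icc 1 N, D ((n : ℚ)⁻¹ • x ^ n) = x ^ (n - 1) * D x := by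
    intro n hn
    have hn0 : (n : ℚ) ≠ 0 := by have := (mem_Icc.mp hn).1; positivity
    rw [D.map_smul, D.leibniz_pow, ← Nat.cast_smul_eq_nsmul ℚ, smul_smul, inv_mul_cancel₀ hn0,
      one_smul, smul_eq_mul]
  rw [truncLogOneSub, map_neg, map_sum, sum_congr rfl hterm, ← sum_mul, neg_mul,
    ← Ico_add_one_right_eq_Icc, sum_Ico_eq_sum_range]
  simp only [add_tsub_cancel_right, add_comm]

lemma Derivation.one_sub_mul_map_truncLogOneSub (D : Derivation ℚ B B) {N : ℕ} {x : B}
    (hx : x ^ N = 0) : (1 - x) * D (truncLogOneSub N x) = -D x := by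
  rw [D.map_truncLogOneSub, neg_mul, mul_neg, ← mul_assoc, mul_neg_geom_sum, hx, sub_zero,
    one_mul]

lemma Derivation.map_truncLogOneSub_add_sub_mul (D : Derivation ℚ B B) {N : ℕ} {x y : B}
    (hx : x ^ N = 0) (hy : y ^ N = 0) (hxy : (x + y - x * y) ^ N = 0) :
    D (truncLogOneSub N (x + y - x * y)) = D (truncLogOneSub N x) + D (truncLogOneSub N y) := by
  have hunit : IsUnit (1 - (x + y - x * y)) := IsNilpotent.isUnit_one_sub ⟨N, hxy⟩
  refine hunit.mul_left_cancel ?_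
  have hDw : D (x + y - x * y) = D x + D y - (x * D y + y * D x) := by
    rw [map_sub, map_add, D.leibniz, smul_eq_mul, smul_eq_mul]
  -- `1 - (x + y - x * y) = (1 - x) * (1 - y)`
  linear_combination D.one_sub_mul_map_truncLogOneSub hxy
    - (1 - y) * D.one_sub_mul_map_truncLogOneSub hx
    - (1 - x) * D.one_sub_mul_map_truncLogOneSub hy - hDw

theorem truncLogOneSub_add_sub_mul {N : ℕ} {x y : B} (hx : x ^ N = 0) (hy : y ^ N = 0) :
    truncLogOneSub (2 * N) (x + y - x * y) =
      truncLogOneSub (2 * N) x + truncLogOneSub (2 * N) y := by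
  have : IsAddTorsionFree B := .of_module_rat B
  let p : B[X] := C x * X
  let q : B[X] := C y * X
  have hp : p ^ N = 0 := by simp only [p, mul_pow, ← C_pow, hx, C_0, zero_mul]
  have hq : q ^ N = 0 := by simp only [q, mul_pow, ← C_pow, hy, C_0, zero_mul]
  let D : Derivation ℚ B[X] B[X] := (derivative' : Derivation B B[X] B[X]).restrictScalars ℚ
  have hderiv : derivative (truncLogOneSub (2 * N) (p + q - p * q)
      - truncLogOneSub (2 * N) p - truncLogOneSub (2 * N) q) = 0 := by
    change D _ = 0
    rw [map_sub, map_sub, D.map_truncLogOneSub_add_sub_mul (pow_eq_zero_of_le (by omega) hp)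
      (pow_eq_zero_of_le (by omega) hq) (pow_add_sub_mul_eq_zero hp hq)]
    abel
  have hconst := eval_eq_of_derivative_eq_zero hderiv 1 0
  simp only [← coe_evalRingHom, map_sub, map_truncLogOneSub] at hconst
  simpa only [p, q, coe_evalRingHom, eval_add, eval_mul, eval_C, eval_X, mul_one, mul_zero,
    add_zero, sub_self, truncLogOneSub_zero, sub_eq_iff_eq_add, zero_add, add_comm] using hconst

end TruncLog

/-- For nilpotent `u v` in a commutative `ℚ`-algebra `A`, with
`w = u + v - u*v` (so `(1-u)*(1-v) = 1-w`), `w` is nilpotent and the truncated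
logarithms satisfy `ln((1-u)(1-v)) = ln(1-u) + ln(1-v)`. -/
theorem log_mul_of_nilpotent (A : Type*) [CommRing A] [Algebra ℚ A] (u v : A)
    (hu : IsNilpotent u) (hv : IsNilpotent v) :
    IsNilpotent (u + v - u * v) ∧
    ∀ M : ℕ, u ^ (M + 1) = 0 → v ^ (M + 1) = 0 → (u + v - u * v) ^ (M + 1) = 0 →
      (-∑ n ∈ Finset.Icc 1 M, ((n : ℚ)⁻¹) • (u + v - u * v) ^ n) =
        (-∑ n ∈ Finset.Icc 1 M, ((n : ℚ)⁻¹) • u ^ n) +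
        (-∑ n ∈ Finset.Icc 1 M, ((n : ℚ)⁻¹) • v ^ n) := by
  refine ⟨?_, fun M huM hvM hwM => ?_⟩
  · obtain ⟨N, hN⟩ := hu
    obtain ⟨N', hN'⟩ := hv
    exact ⟨_, pow_add_sub_mul_eq_zero (pow_eq_zero_of_le (le_max_left N N') hN)
      (pow_eq_zero_of_le (le_max_right N N') hN')⟩
  have hM : M ≤ 2 * (M + 1) := by omega
  change truncLogOneSub M (u + v - u * v) = truncLogOneSub M u + truncLogOneSub M v
  rw [← truncLogOneSub_eq_of_pow_eq_zero hM hwM, ← truncLogOneSub_eq_of_pow_eq_zero hM huM,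
    ← truncLogOneSub_eq_of_pow_eq_zero hM hvM, truncLogOneSub_add_sub_mul huM hvM]
end

section
/- Let R = ℚ[T]/(T^{n+1}) with t the image of T, let k ≥ 0 be a natural number, and let ψ : R → R be any ℚ-algebra homomorphism satisfying ψ(t) = 1 − (1−t)^k. Set x := −(t + (1/2)t² + (1/3)t³ + ⋯ + (1/n)tⁿ) ∈ R. Then ψ(x) = k·x, i.e. x is an eigenvector of the k-th Adams operator on R with eigenvalue k. -/
/-!
Write `L(a) = a + a²/2 + ⋯ + aⁿ/n` and `U = 1 - (1 - X)^k`, so that `ψ x - k x` is the image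
of `F = L(U) - k L(X) ∈ ℚ[X]`. The polynomial `U` satisfies `(1 - X) U' = k (1 - U)`, the formal
shadow of `log (1 - U) = k log (1 - X)`, and `(1 - a) L(a)' = (1 - aⁿ) a'`; together they give
`(1 - X) F' = k (Xⁿ - Uⁿ)`. As `X ∣ U`, this makes `Xⁿ ∣ F'`, and since also `F(0) = 0`,
`X^(n+1) ∣ F`.
-/

/-- The ring `R = ℚ[T]/(T^(n+1))`. -/
abbrev PolyQuot (n : ℕ) : Type :=
  Polynomial ℚ ⧸ Ideal.span {(Polynomial.X : Polynomial ℚ) ^ (n + 1)}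

/-- The image `t` of `T` in `ℚ[T]/(T^(n+1))`. -/
noncomputable def tgen (n : ℕ) : PolyQuot n :=
  Ideal.Quotient.mk _ Polynomial.X

open Polynomial Finset

theorem one_sub_X_mul_derivative_one_sub_one_sub_X_pow (R : Type*) [CommRing R] (k : ℕ) :
    (1 - X) * derivative (1 - (1 - X) ^ k : R[X]) = (k : R[X]) * (1 - X) ^ k := by
  rcases k with _ | k
  · simp
  · rw [derivative_sub, derivative_one, derivative_pow, derivative_sub, derivative_one,
      derivative_X, C_eq_natCast, Nat.add_sub_cancel]
    push_cast
    ring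

section LogTrunc

variable {A : Type*} [CommRing A] [Algebra ℚ A]

/-- The truncation `a + a²/2 + ⋯ + aⁿ/n` of `-log (1 - a)`. -/
def logTrunc (n : ℕ) (a : A) : A :=
  ∑ i ∈ Icc 1 n, (i : ℚ)⁻¹ • a ^ i

theorem logTrunc_eq_sum_range (n : ℕ) (a : A) :
    logTrunc n a = ∑ j ∈ range n, ((j + 1 : ℕ) : ℚ)⁻¹ • a ^ (j + 1) := by
  rw [logTrunc, ← Ico_add_one_right_eq_Icc, sum_Ico_eq_sum_range, Nat.add_sub_cancel]
  simp only [add_comm 1]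

theorem AlgHom.map_logTrunc {B : Type*} [CommRing B] [Algebra ℚ B] (f : A →ₐ[ℚ] B) (n : ℕ)
    (a : A) :
    f (logTrunc n a) = logTrunc n (f a) := by
  simp only [logTrunc, map_sum, map_smul, map_pow]

theorem dvd_logTrunc (n : ℕ) (a : A) : a ∣ logTrunc n a :=
  dvd_sum fun i hi => dvd_smul_of_dvd _ (dvd_pow_self a (by grind))

theorem derivative_logTrunc (n : ℕ) (p : A[X]) :
    derivative (logTrunc n p) = (∑ j ∈ range n, p ^ j) * derivative p := by
  rw [logTrunc_eq_sum_range, derivative_sum, sum_mul]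
  refine sum_congr rfl fun j _ => ?_
  rw [derivative_smul, derivative_pow, Nat.add_sub_cancel, C_eq_natCast, mul_assoc,
    ← nsmul_eq_mul, ← Nat.cast_smul_eq_nsmul ℚ, smul_smul, inv_mul_cancel₀ (by positivity),
    one_smul]

theorem X_pow_succ_dvd_of_derivative {n : ℕ} {p : A[X]} (h0 : p.coeff 0 = 0)
    (hp : X ^ n ∣ derivative p) : X ^ (n + 1) ∣ p := by
  rw [X_pow_dvd_iff] at hp ⊢
  rintro (_ | d) hd
  · exact h0
  · have hunit : IsUnit ((d : A) + 1) := by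
      simpa using (IsUnit.mk0 ((d + 1 : ℕ) : ℚ) (by positivity)).map (algebraMap ℚ A)
    simpa [coeff_derivative, hunit.mul_left_eq_zero] using hp d (by omega)

theorem X_pow_succ_dvd_logTrunc_one_sub_one_sub_X_pow_sub (n k : ℕ) :
    (X : A[X]) ^ (n + 1) ∣ logTrunc n (1 - (1 - X) ^ k) - (k : A[X]) * logTrunc n X := by
  have hXU : (X : A[X]) ∣ 1 - (1 - X) ^ k := by simp [X_dvd_iff, coeff_zero_eq_eval_zero]
  have hF' : (1 - X) * derivative (logTrunc n (1 - (1 - X) ^ k) - (k : A[X]) * logTrunc n X) =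
      (k : A[X]) * (X ^ n - (1 - (1 - X) ^ k) ^ n) := by
    rw [derivative_sub, derivative_mul, derivative_natCast, derivative_logTrunc,
      derivative_logTrunc, derivative_X]
    linear_combination (∑ j ∈ range n, (1 - (1 - X) ^ k) ^ j) *
        one_sub_X_mul_derivative_one_sub_one_sub_X_pow A k -
      (k : A[X]) * geom_sum_mul (1 - (1 - X) ^ k : A[X]) n +
      (k : A[X]) * geom_sum_mul (X : A[X]) n
  refine X_pow_succ_dvd_of_derivative ?_ ?_
  · rw [← X_dvd_iff]
    exact dvd_sub (hXU.trans (dvd_logTrunc n _)) ((dvd_logTrunc n X).mul_left _)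
  · have hcop : IsCoprime ((X : A[X]) ^ n) (1 - X) := IsCoprime.pow_left ⟨1, 1, by ring⟩
    refine hcop.dvd_of_dvd_mul_left ?_
    rw [hF']
    exact (dvd_sub dvd_rfl (pow_dvd_pow_of_dvd hXU n)).mul_left _

end LogTrunc

theorem logTrunc_one_sub_one_sub_tgen_pow (n k : ℕ) :
    logTrunc n (1 - (1 - tgen n) ^ k) = (k : PolyQuot n) * logTrunc n (tgen n) := by
  let f := Ideal.Quotient.mkₐ ℚ (Ideal.span {(X : ℚ[X]) ^ (n + 1)})
  have ht : tgen n = f X := rfl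
  rw [ht, ← sub_eq_zero]
  simp only [← map_one f, ← map_sub, ← map_pow, ← f.map_logTrunc, ← map_natCast f k, ← map_mul]
  rw [Ideal.Quotient.mkₐ_eq_mk, Ideal.Quotient.eq_zero_iff_mem, Ideal.mem_span_singleton]
  exact X_pow_succ_dvd_logTrunc_one_sub_one_sub_X_pow_sub n k

theorem adams_eigenvector_general (n : ℕ) (k : ℕ)
    (ψ : PolyQuot n →ₐ[ℚ] PolyQuot n)
    (hψ : ψ (tgen n) = 1 - (1 - tgen n) ^ k) :
    ψ (-(∑ i ∈ Finset.Icc 1 n, ((i : ℚ)⁻¹) • (tgen n) ^ i)) =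
      (k : PolyQuot n) * (-(∑ i ∈ Finset.Icc 1 n, ((i : ℚ)⁻¹) • (tgen n) ^ i)) := by
  rw [show ∑ i ∈ Finset.Icc 1 n, ((i : ℚ)⁻¹) • (tgen n) ^ i = logTrunc n (tgen n) from rfl,
    map_neg, ψ.map_logTrunc, hψ, logTrunc_one_sub_one_sub_tgen_pow]
  exact (mul_neg (k : PolyQuot n) _).symm

/-- in `R = ℚ[T]/(T^(n+1))`, if `ψ` is a `ℚ`-algebra endomorphism with
`ψ t = 1 - (1-t)^k` (the `k`-th Adams operator), then
`x = -(t + (1/2)t² + ⋯ + (1/n)tⁿ)` satisfies `ψ x = k • x`. -/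
theorem adams_eigenvector (n : ℕ) (hn : 1 ≤ n) (k : ℕ)
    (ψ : PolyQuot n →ₐ[ℚ] PolyQuot n)
    (hψ : ψ (tgen n) = 1 - (1 - tgen n) ^ k) :
    ψ (-(∑ i ∈ Finset.Icc 1 n, ((i : ℚ)⁻¹) • (tgen n) ^ i)) =
      (k : PolyQuot n) * (-(∑ i ∈ Finset.Icc 1 n, ((i : ℚ)⁻¹) • (tgen n) ^ i)) :=
  adams_eigenvector_general n k ψ hψ
end
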